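/- arXiv:2404.03828 — 2 statements merged into one kernel-verified Lean document; each statement's English description precedes it below -/
import Mathlib

section
/- The Outlier-Efficient Hopfield energy H is differentiable on ℝ^d with gradient ∇H(x) = x − T(x) for every x ∈ ℝ^d; consequently, a point x is a fixed point of the retrieval dynamics T (i.e., T(x) = x) if and only if x is a stationary point of H (i.e., ∇H(x) = 0). -/
/-!
The gradient of `lse₁` is computed by the chain rule through `log` and `exp`: the factor `β`
coming from the inner exponents cancels `β⁻¹`, and dividing by `1 + ∑ exp` leaves exactly the
`Softmax₁` weights, so `∇ lse₁ = T`. Since `½⟨x, x⟩` has gradient `x`, `∇H(x) = x − T(x)`, which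
vanishes exactly at the fixed points of `T`.
-/

open Real
open scoped BigOperators RealInnerProductSpace

/-- `Softmax₁`: for `z ∈ ℝ^M`, `[Softmax₁(z)]_ν = exp(z_ν)/(1 + ∑_μ exp(z_μ))`. -/
noncomputable def softmax1 {M : ℕ} (z : Fin M → ℝ) : Fin M → ℝ :=
  fun ν => Real.exp (z ν) / (1 + ∑ μ, Real.exp (z μ))

section Gradient

variable {F : Type*} [NormedAddCommGroup F] [InnerProductSpace ℝ F] [CompleteSpace F]
  {f g : F → ℝ} {f' g' x : F}

theorem HasGradientAt.add (hf : HasGradientAt f f' x) (hg : HasGradientAt g g' x) :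
    HasGradientAt (fun y => f y + g y) (f' + g') x := by
  rw [hasGradientAt_iff_hasFDerivAt] at *
  rw [map_add]
  exact hf.fun_add hg

theorem HasGradientAt.neg (hf : HasGradientAt f f' x) :
    HasGradientAt (fun y => -f y) (-f') x := by
  rw [hasGradientAt_iff_hasFDerivAt] at *
  rw [map_neg]
  exact hf.fun_neg

theorem HasGradientAt.sum {ι : Type*} {s : Finset ι} {f : ι → F → ℝ} {f' : ι → F}
    (hf : ∀ i ∈ s, HasGradientAt (f i) (f' i) x) :
    HasGradientAt (fun y => ∑ i ∈ s, f i y) (∑ i ∈ s, f' i) x := by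
  simp only [hasGradientAt_iff_hasFDerivAt] at *
  rw [map_sum]
  exact HasFDerivAt.fun_sum hf

theorem HasDerivAt.comp_hasGradientAt (x : F) {h : ℝ → ℝ} {h' : ℝ} (hh : HasDerivAt h h' (f x))
    (hf : HasGradientAt f f' x) : HasGradientAt (fun y => h (f y)) (h' • f') x := by
  rw [hasGradientAt_iff_hasFDerivAt] at *
  rw [map_smul]
  exact hh.comp_hasFDerivAt x hf

theorem hasGradientAt_inner_left (a x : F) : HasGradientAt (fun y => ⟪a, y⟫) a x := by
  rw [hasGradientAt_iff_hasFDerivAt]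
  exact (innerSL ℝ a).hasFDerivAt

theorem hasGradientAt_half_inner_self (x : F) :
    HasGradientAt (fun y => (1 / 2) * ⟪y, y⟫) x x := by
  rw [hasGradientAt_iff_hasFDerivAt]
  have h := (hasStrictFDerivAt_norm_sq x).hasFDerivAt.const_mul (1 / 2 : ℝ)
  simp only [← real_inner_self_eq_norm_sq] at h
  refine h.congr_fderiv ?_
  ext y
  simp

end Gradient

section LogSumExp

variable {F : Type*} [NormedAddCommGroup F] [InnerProductSpace ℝ F] [CompleteSpace F] {M : ℕ}

noncomputable def lse1 (β : ℝ) (ξ : Fin M → F) (x : F) : ℝ :=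
  β⁻¹ * log (1 + ∑ μ, exp (β * ⟪ξ μ, x⟫))

theorem hasGradientAt_lse1 {β : ℝ} (hβ : β ≠ 0) (ξ : Fin M → F) (x : F) :
    HasGradientAt (lse1 β ξ) (∑ μ, softmax1 (fun ν => β * ⟪ξ ν, x⟫) μ • ξ μ) x := by
  have hpos : 0 < 1 + ∑ μ, exp (β * ⟪ξ μ, x⟫) := by positivity
  have hsum : HasGradientAt (fun y => 1 + ∑ μ, exp (β * ⟪ξ μ, y⟫))
      (∑ μ, exp (β * ⟪ξ μ, x⟫) • β • ξ μ) x := by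
    simpa using (hasGradientAt_const x (1 : ℝ)).add <| HasGradientAt.sum (s := Finset.univ)
      fun μ _ => (hasDerivAt_exp _).comp_hasGradientAt x
        ((hasDerivAt_const_mul β).comp_hasGradientAt x (hasGradientAt_inner_left (ξ μ) x))
  unfold lse1
  convert ((hasDerivAt_log hpos.ne').const_mul β⁻¹).comp_hasGradientAt x hsum using 1
  simp only [softmax1, Finset.smul_sum, smul_smul]
  refine Finset.sum_congr rfl fun μ _ => ?_
  congr 1
  field_simp

end LogSumExp

/-- The Outlier-Efficient Hopfield energy `H` is differentiable on `ℝ^d` with gradient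
`∇H(x) = x − T(x)` for every `x`; consequently, `x` is a fixed point of the retrieval
dynamics `T` (i.e. `T(x) = x`) iff `x` is a stationary point of `H` (i.e. `∇H(x) = 0`). -/
theorem stmt4 (d M : ℕ) (β : ℝ) (hβ : 0 < β)
    (ξ : Fin M → EuclideanSpace ℝ (Fin d))
    (H : EuclideanSpace ℝ (Fin d) → ℝ)
    (hH : ∀ x, H x = -(β⁻¹ * Real.log (1 + ∑ μ, Real.exp (β * ⟪ξ μ, x⟫)))
      + (1/2) * ⟪x, x⟫)
    (T : EuclideanSpace ℝ (Fin d) → EuclideanSpace ℝ (Fin d))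
    (hT : ∀ x, T x = ∑ μ, softmax1 (fun ν => β * ⟪ξ ν, x⟫) μ • ξ μ) :
    (∀ x, HasGradientAt H (x - T x) x) ∧
    ∀ x, T x = x ↔ gradient H x = 0 := by
  have hgrad : ∀ x, HasGradientAt H (x - T x) x := by
    intro x
    rw [funext hH, hT, sub_eq_neg_add]
    exact (hasGradientAt_lse1 hβ.ne' ξ x).neg.add (hasGradientAt_half_inner_self x)
  refine ⟨hgrad, fun x => ?_⟩
  rw [(hgrad x).gradient, sub_eq_zero, eq_comm]
end

section
/- For every x ∈ ℝ^M, writing s = Softmax₁(x), the entrywise ℓ_{1,1} norm of the Jacobian of Softmax₁ at x is at most 2; that is, ∑_{i=1}^M ∑_{j=1}^M |s_i · (δ_{ij} − s_j)| ≤ 2, where δ_{ij} is the Kronecker delta. -/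
/-! The row `i` of the Jacobian `s_i (δ_{ij} - s_j)` has `ℓ₁` norm at most `s_i (1 + ∑ s) ≤ 2 s_i`
by the triangle inequality, so the total is at most `2 ∑ s ≤ 2`; Softmax₁ is nonnegative with
total mass `∑ eˣ / (1 + ∑ eˣ) < 1`. -/

open Real
open scoped BigOperators

open Finset

section SubProbability

variable {ι : Type*} [Fintype ι] [DecidableEq ι] {s : ι → ℝ}

theorem sum_abs_ite_sub_le (hs : ∀ j, 0 ≤ s j) (i : ι) :
    ∑ j, |(if i = j then (1 : ℝ) else 0) - s j| ≤ 1 + ∑ j, s j :=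
  calc ∑ j, |(if i = j then (1 : ℝ) else 0) - s j|
      ≤ ∑ j, (|if i = j then (1 : ℝ) else 0| + |s j|) := sum_le_sum fun j _ => abs_sub _ _
    _ = 1 + ∑ j, s j := by
      simp only [sum_add_distrib, apply_ite, abs_one, abs_zero, sum_ite_eq, mem_univ,
        if_true, abs_of_nonneg (hs _)]

theorem sum_sum_abs_mul_ite_sub_le_two (hs : ∀ j, 0 ≤ s j) (hs₁ : ∑ j, s j ≤ 1) :
    ∑ i, ∑ j, |s i * ((if i = j then (1 : ℝ) else 0) - s j)| ≤ 2 :=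
  calc ∑ i, ∑ j, |s i * ((if i = j then (1 : ℝ) else 0) - s j)|
      = ∑ i, s i * ∑ j, |(if i = j then (1 : ℝ) else 0) - s j| := by
        simp only [abs_mul, abs_of_nonneg (hs _), mul_sum]
    _ ≤ ∑ i, s i * 2 := sum_le_sum fun i _ =>
        mul_le_mul_of_nonneg_left ((sum_abs_ite_sub_le hs i).trans (by linarith)) (hs i)
    _ ≤ 2 := by rw [← sum_mul]; linarith

end SubProbability

theorem softmax1_nonneg {M : ℕ} (z : Fin M → ℝ) (ν : Fin M) : 0 ≤ softmax1 z ν := by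
  unfold softmax1; positivity

theorem sum_softmax1_le_one {M : ℕ} (z : Fin M → ℝ) : ∑ ν, softmax1 z ν ≤ 1 := by
  have hpos : 0 < 1 + ∑ μ, exp (z μ) := by positivity
  simp only [softmax1]
  rw [← sum_div, div_le_one hpos]
  linarith

/-- For every `x ∈ ℝ^M`, writing `s = Softmax₁(x)`, the entrywise `ℓ_{1,1}` norm of the
Jacobian of `Softmax₁` at `x` is at most `2`:
`∑_i ∑_j |s_i (δ_{ij} − s_j)| ≤ 2`. -/
theorem stmt14 (M : ℕ) (x : Fin M → ℝ) :
    ∑ i : Fin M, ∑ j : Fin M,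
      |softmax1 x i * ((if i = j then (1 : ℝ) else 0) - softmax1 x j)| ≤ 2 :=
  sum_sum_abs_mul_ite_sub_le_two (softmax1_nonneg x) (sum_softmax1_le_one x)
end
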